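/- Let G be the semidirect product of the cyclic group ZMod 13 by the cyclic group ZMod 3, where the generator of ZMod 3 acts on ZMod 13 by multiplication by 3 (this group has GAP Id (39, 1)). Let H be the semidirect product of (ZMod 13)² by ZMod 3, where the generator of ZMod 3 acts by the linear automorphism (x, y) ↦ (y, −x − y). Then there exists an injective group homomorphism from G into H. -/

import Mathlib

/-- The homomorphism `AddAut A →* MulAut (Multiplicative A)`. -/
def addAutToMulAut {A : Type} [AddGroup A] : Multiplicative (AddAut A) →* MulAut (Multiplicative A) where
  toFun f := AddEquiv.toMultiplicative f.toAdd
  map_one' := rfl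
  map_mul' _ _ := rfl

/-- The homomorphism `Multiplicative (ZMod n) →* G` sending the generator to an
element `g` with `g ^ n = 1`. -/
def zmodHom {n : ℕ} {G : Type} [Group G] (g : G) (hg : g ^ n = 1) :
    Multiplicative (ZMod n) →* G :=
  AddMonoidHom.toMultiplicativeLeft <|
    ZMod.lift n ⟨zmultiplesHom (Additive G) (Additive.ofMul g), by
      first
        | simpa using congrArg Additive.ofMul hg
        | simp [← ofMul_pow, hg]⟩

/-- Multiplication by `3` as an automorphism of `ZMod 13`. -/
def mulThree : AddAut (ZMod 13) where
  toFun x := 3 * x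
  invFun x := 9 * x
  left_inv := by decide
  right_inv := by decide
  map_add' := by decide

lemma mulThree_pow_three : (addAutToMulAut (Multiplicative.ofAdd mulThree)) ^ 3 = 1 := by
  have h : (Multiplicative.ofAdd mulThree) ^ 3 = 1 :=
    congrArg Multiplicative.ofAdd (AddEquiv.ext (by decide))
  rw [← map_pow, h, map_one]

/-- The action of `ZMod 3` on `ZMod 13` with the generator acting by `x ↦ 3x`. -/
def actG : Multiplicative (ZMod 3) →* MulAut (Multiplicative (ZMod 13)) :=
  zmodHom (addAutToMulAut (Multiplicative.ofAdd mulThree)) mulThree_pow_three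

/-- The automorphism `(x, y) ↦ (y, -x - y)` of `(ZMod 13)²`. -/
def rho : AddAut (ZMod 13 × ZMod 13) where
  toFun p := (p.2, -p.1 - p.2)
  invFun p := (-p.1 - p.2, p.1)
  left_inv := by
    intro p
    simp only [Prod.ext_iff]
    constructor <;> first | trivial | ring_nf
  right_inv := by
    intro p
    simp only [Prod.ext_iff]
    constructor <;> first | trivial | ring_nf
  map_add' := by
    intro p q
    simp only [Prod.ext_iff, Prod.fst_add, Prod.snd_add]
    constructor <;> first | trivial | ring_nf

lemma rho_pow_three : (addAutToMulAut (Multiplicative.ofAdd rho)) ^ 3 = 1 := by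
  have h : (Multiplicative.ofAdd rho) ^ 3 = 1 := by
    apply congrArg Multiplicative.ofAdd
    apply AddEquiv.ext
    intro p
    show rho (rho (rho p)) = p
    simp only [rho, AddEquiv.coe_mk, Equiv.coe_fn_mk, Prod.ext_iff]
    constructor <;> first | trivial | ring_nf
  rw [← map_pow, h, map_one]

/-- The action of `ZMod 3` on `(ZMod 13)²` with the generator acting by
`(x, y) ↦ (y, -x - y)`. -/
def actH : Multiplicative (ZMod 3) →* MulAut (Multiplicative (ZMod 13 × ZMod 13)) :=
  zmodHom (addAutToMulAut (Multiplicative.ofAdd rho)) rho_pow_three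

/-!
The vector `(1, 3)` spans a line of `(ZMod 13)²` on which `rho` acts as multiplication by `3`:
`3` is a root of `t² + t + 1`, the characteristic polynomial of `rho`. Hence `x ↦ (x, 3x)`
intertwines the generator's actions on `ZMod 13` and `(ZMod 13)²`, and, together with the
identity on `ZMod 3`, induces an injective homomorphism of semidirect products.
-/

theorem SemidirectProduct.map_injective {N₁ G₁ N₂ G₂ : Type*} [Group N₁] [Group G₁] [Group N₂]
    [Group G₂] {φ₁ : G₁ →* MulAut N₁} {φ₂ : G₂ →* MulAut N₂} {fn : N₁ →* N₂} {fg : G₁ →* G₂}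
    (h : ∀ g : G₁, fn.comp (φ₁ g).toMonoidHom = (φ₂ (fg g)).toMonoidHom.comp fn)
    (hn : Function.Injective fn) (hg : Function.Injective fg) :
    Function.Injective (map fn fg h) :=
  fun _ _ hxy => SemidirectProduct.ext (hn (congrArg left hxy)) (hg (congrArg right hxy))

theorem zmodHom_ofAdd_one {n : ℕ} {G : Type} [Group G] (g : G) (hg : g ^ n = 1) :
    zmodHom g hg (Multiplicative.ofAdd 1) = g := by
  rw [zmodHom, ← Int.cast_one]
  simp only [AddMonoidHom.toMultiplicativeLeft_apply_apply, toAdd_ofAdd, ZMod.lift_coe,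
    zmultiplesHom_apply, one_smul, toMul_ofMul]

theorem zmodHom_comp_eq_comp_zmodHom {n : ℕ} [NeZero n] {N₁ N₂ : Type} [Group N₁] [Group N₂]
    {a : MulAut N₁} {b : MulAut N₂} (ha : a ^ n = 1) (hb : b ^ n = 1) {f : N₁ →* N₂}
    (hf : ∀ x, f (a x) = b (f x)) (g : Multiplicative (ZMod n)) :
    f.comp (zmodHom a ha g).toMonoidHom = (zmodHom b hb g).toMonoidHom.comp f := by
  obtain ⟨k, rfl⟩ : ∃ k : ℕ, Multiplicative.ofAdd 1 ^ k = g := by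
    obtain ⟨k, hk⟩ := ZMod.natCast_zmod_surjective g.toAdd
    exact ⟨k, by rw [← ofAdd_nsmul, nsmul_one, hk, ofAdd_toAdd]⟩
  ext x
  simp only [MonoidHom.comp_apply, MulEquiv.coe_toMonoidHom, map_pow, zmodHom_ofAdd_one]
  induction k generalizing x with
  | zero => rfl
  | succ k ih => rw [pow_succ, pow_succ, MulAut.mul_apply, MulAut.mul_apply, ih, hf]

theorem neg_sub_mul_eq_mul_mul_of_sq_add_add_one {R : Type*} [CommRing R] {c : R}
    (hc : c ^ 2 + c + 1 = 0) (x : R) : -x - c * x = c * (c * x) := by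
  linear_combination -x * hc

def eigenlineHom : Multiplicative (ZMod 13) →* Multiplicative (ZMod 13 × ZMod 13) :=
  AddMonoidHom.toMultiplicative ((AddMonoidHom.id _).prod (AddMonoidHom.mulLeft 3))

theorem eigenlineHom_injective : Function.Injective eigenlineHom :=
  fun _ _ hxy => congrArg (fun p => p.toAdd.1) hxy

theorem eigenlineHom_mulThree (x : Multiplicative (ZMod 13)) :
    eigenlineHom (addAutToMulAut (.ofAdd mulThree) x) =
      addAutToMulAut (.ofAdd rho) (eigenlineHom x) := by
  show ((3 * x.toAdd, 3 * (3 * x.toAdd)) : ZMod 13 × ZMod 13) =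
    (3 * x.toAdd, -x.toAdd - 3 * x.toAdd)
  rw [neg_sub_mul_eq_mul_mul_of_sq_add_add_one (by decide)]

/-- The group `ZMod 13 ⋊ ZMod 3` with generator acting by multiplication by `3`
(GAP Id `(39, 1)`) embeds into `(ZMod 13)² ⋊ ZMod 3` with generator acting by
`(x, y) ↦ (y, -x - y)`. -/
theorem gapId_39_1_embeds :
    ∃ f : (Multiplicative (ZMod 13) ⋊[actG] Multiplicative (ZMod 3)) →*
      (Multiplicative (ZMod 13 × ZMod 13) ⋊[actH] Multiplicative (ZMod 3)),
      Function.Injective f := by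
  have h : ∀ g, eigenlineHom.comp (actG g).toMonoidHom =
      (actH (MonoidHom.id _ g)).toMonoidHom.comp eigenlineHom :=
    zmodHom_comp_eq_comp_zmodHom mulThree_pow_three rho_pow_three eigenlineHom_mulThree
  exact ⟨_, SemidirectProduct.map_injective h eigenlineHom_injective Function.injective_id⟩
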